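/- Let d be a function on Λ-modules satisfying (d2). Given an exact sequence 0 → K → L^0 → L^1 → ⋯ → L^i → N → 0 of Λ-modules such that d(N) + i − j < d(L^j) for all 0 ≤ j ≤ i, one has d(K) = d(N) + i + 1. -/

import Mathlib

/-!
Induct on `i`, splitting the sequence at its right end. Since `d (L^i) > d N`, condition (d2)
applied to `0 → M → L^i → N → 0`, with `M` the kernel of `L^i → N`, gives `d M = d N + 1`.
The shorter sequence `0 → K → L^0 → ⋯ → L^(i-1) → M → 0` satisfies the hypotheses with `N`
replaced by `M` and `i` by `i - 1`, so `d K = d M + i = d N + i + 1`.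
-/

universe u

/-- A `d`-function: assigns to every `Λ`-module a value in `ℕ ∪ {∞}`. -/
abbrev DFun (Λ : Type u) [Ring Λ] :=
  (N : Type u) → [AddCommGroup N] → [Module Λ N] → ℕ∞

/-- Condition (d2): if `d L > d N` then `d K = d N + 1`. -/
def CondD2 (Λ : Type u) [Ring Λ] (d : DFun Λ) : Prop :=
  ∀ (K L N : Type u) [AddCommGroup K] [Module Λ K] [AddCommGroup L] [Module Λ L]
    [AddCommGroup N] [Module Λ N] (f : K →ₗ[Λ] L) (g : L →ₗ[Λ] N),
    Function.Injective f → Function.Surjective g →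
    LinearMap.range f = LinearMap.ker g →
    d N < d L → d K = d N + 1

open Function LinearMap

theorem Function.Exact.exists_surjective_ker_subtype_comp_eq {R M N P : Type*} [Ring R]
    [AddCommGroup M] [AddCommGroup N] [AddCommGroup P] [Module R M] [Module R N] [Module R P]
    {f : M →ₗ[R] N} {g : N →ₗ[R] P} (h : Exact f g) :
    ∃ f' : M →ₗ[R] ker g, Surjective f' ∧ (ker g).subtype ∘ₗ f' = f := by
  refine ⟨f.codRestrict (ker g) fun x => h.apply_apply_eq_zero x, ?_, rfl⟩
  rintro ⟨y, hy⟩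
  obtain ⟨x, rfl⟩ := (h y).mp hy
  exact ⟨x, rfl⟩

namespace CondD2

variable {Λ : Type u} [Ring Λ] {d : DFun Λ}

theorem eq_add_one_of_exact (hd : CondD2 Λ d) {K L N : Type u} [AddCommGroup K] [Module Λ K]
    [AddCommGroup L] [Module Λ L] [AddCommGroup N] [Module Λ N] {f : K →ₗ[Λ] L}
    {g : L →ₗ[Λ] N} (hf : Injective f) (hg : Surjective g) (hfg : Exact f g)
    (hlt : d N < d L) : d K = d N + 1 :=
  hd K L N f g hf hg hfg.linearMap_ker_eq.symm hlt

theorem ker_eq_add_one (hd : CondD2 Λ d) {L N : Type u} [AddCommGroup L] [Module Λ L]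
    [AddCommGroup N] [Module Λ N] {g : L →ₗ[Λ] N} (hg : Surjective g) (hlt : d N < d L) :
    d (ker g) = d N + 1 :=
  hd.eq_add_one_of_exact Subtype.coe_injective hg (exact_subtype_ker_map g) hlt

theorem eq_add_of_exact_chain (hd : CondD2 Λ d) (Lc : ℕ → Type u) [∀ j, AddCommGroup (Lc j)]
    [∀ j, Module Λ (Lc j)] (g : ∀ j, Lc j →ₗ[Λ] Lc (j + 1)) (hinj : Injective (g 0))
    (i : ℕ) {N : Type u} [AddCommGroup N] [Module Λ N] (gN : Lc (i + 1) →ₗ[Λ] N)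
    (hsurj : Surjective gN) (hex : ∀ j < i, Exact (g j) (g (j + 1))) (hexN : Exact (g i) gN)
    (hdl : ∀ j ≤ i, d N + i < d (Lc (j + 1)) + j) :
    d (Lc 0) = d N + i + 1 := by
  induction i generalizing N with
  | zero =>
    rw [Nat.cast_zero, add_zero]
    exact hd.eq_add_one_of_exact hinj hsurj hexN (by simpa using hdl 0 le_rfl)
  | succ i ih =>
    have hlt : d N < d (Lc (i + 2)) := lt_of_add_lt_add_right (hdl (i + 1) le_rfl)
    have hdM : d (ker gN) = d N + 1 := hd.ker_eq_add_one hsurj hlt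
    obtain ⟨g', hg'surj, hg'⟩ := hexN.exists_surjective_ker_subtype_comp_eq
    have hexM : Exact (g i) g' := by
      rw [← Subtype.coe_injective.comp_exact_iff_exact (i := (ker gN).subtype), hg']
      exact hex i i.lt_succ_self
    have hshift : d (ker gN) + i = d N + (i + 1 : ℕ) := by
      rw [hdM]; push_cast; ring
    rw [ih g' hg'surj (fun j hj => hex j (by omega)) hexM
      (fun j hj => hshift ▸ hdl j (by omega)), hshift]

end CondD2

/-- Proposition 2.1(2).  The exact sequence `0 → K → L^0 → ⋯ → L^i → N → 0`
is encoded as a chain `Lc` with `K = Lc 0`, `L^j = Lc (j+1)` for `0 ≤ j ≤ i`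
and `N = Lc (i+2)`; the inequality `d N + i - j < d (L^j)` is written
`d N + i < d (L^j) + j` to avoid negative numbers. -/
theorem stmt5 (Λ : Type u) [Ring Λ] (d : DFun Λ) (hd : CondD2 Λ d)
    (i : ℕ) (Lc : ℕ → Type u) [∀ j, AddCommGroup (Lc j)] [∀ j, Module Λ (Lc j)]
    (g : ∀ j, Lc j →ₗ[Λ] Lc (j + 1))
    (hinj : Function.Injective (g 0))
    (hsurj : Function.Surjective (g (i + 1)))
    (hex : ∀ j, j ≤ i → Function.Exact (g j) (g (j + 1)))
    (hdl : ∀ j, j ≤ i → d (Lc (i + 2)) + i < d (Lc (j + 1)) + j) :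
    d (Lc 0) = d (Lc (i + 2)) + i + 1 :=
  hd.eq_add_of_exact_chain Lc g hinj i (g (i + 1)) hsurj (fun j hj => hex j hj.le)
    (hex i le_rfl) hdl
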